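/- In any algebra (S,*,') satisfying the three axioms, every element x is a regular element with x' as an inverse: x * x' * x = x and x' * x * x' = x' (products evaluated with any bracketing, since * is associative). -/

import Mathlib

/-!
Expanding `x'` to `(x' * x'') * x'` by (E1) and reassociating twice with (E3) gives
`x' * x = x' * x''`; hence `x' * x * x' = x' * x'' * x' = x'`, again by (E1).
-/

section

variable {S : Type*} {m : S → S → S} {i : S → S}

theorem inv_mul_eq_inv_mul_inv_inv (E1 : ∀ x, m (m x (i x)) x = x)
    (E3 : ∀ x y z, m (m x y) z = m x (m y (i (i z)))) (x : S) :
    m (i x) x = m (i x) (i (i x)) :=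
  calc m (i x) x
      = m (m (m (i x) (i (i x))) (i x)) x := by rw [E1]
    _ = m (i x) (m (m (i (i x)) (i (i (i x)))) (i (i x))) := by rw [E3 (i x), E3 (i x)]
    _ = m (i x) (i (i x)) := by rw [E1]

theorem inv_mul_mul_inv (E1 : ∀ x, m (m x (i x)) x = x)
    (E3 : ∀ x y z, m (m x y) z = m x (m y (i (i z)))) (x : S) :
    m (m (i x) x) (i x) = i x := by
  rw [inv_mul_eq_inv_mul_inv_inv E1 E3, E1]

end

theorem stmt_general (S : Type*) (m : S → S → S) (i : S → S)
    (E1 : ∀ x, m (m x (i x)) x = x)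
    (E3 : ∀ x y z, m (m x y) z = m x (m y (i (i z)))) :
    ∀ x, m (m x (i x)) x = x ∧ m (m (i x) x) (i x) = i x :=
  fun x => ⟨E1 x, inv_mul_mul_inv E1 E3 x⟩

theorem stmt (S : Type*) (m : S → S → S) (i : S → S)
    (E1 : ∀ x, m (m x (i x)) x = x)
    (E2 : ∀ x y, m (m x (i x)) (m (i y) y) = m (m (i y) y) (m x (i x)))
    (E3 : ∀ x y z, m (m x y) z = m x (m y (i (i z)))) :
    ∀ x, m (m x (i x)) x = x ∧ m (m (i x) x) (i x) = i x :=
  stmt_general S m i E1 E3
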